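/- (Convergence of the LatentSearch loss sequence for β = 1.) Let p be a strictly positive joint pmf on Fin m × Fin n, let q₁ be a strictly positive conditional pmf, and define q_{i+1} = T_1(q_i) for all i ≥ 1. Then every q_i is a strictly positive conditional pmf, the sequence of loss values (L_1(q_i))_{i≥1} is nonincreasing and bounded below, and hence it converges to a limit in ℝ. -/

import Mathlib

/-!
Write `D(u; a, b) = ∑_{x,y} p(x,y) ∑_z u(z|x,y) log (u(z|x,y) / (a(z|x) b(z|y)))`. For a
conditional pmf `q` the loss splits as `L_1(q) = I(X;Y) + D(q; qX, qY)`, and `D(q; qX, qY) ≥ 0` by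
Gibbs' inequality, so `I(X;Y)` bounds the loss from below. The update `T_1` is one round of
alternating minimisation of `D`: for fixed `u`, the marginals `qX u, qY u` minimise `D(u; a, b)`
over conditional pmfs `a, b`, and for fixed `a, b`, the normalised product `a b / ∑_z a b`
minimises `D(u; a, b)` over conditional pmfs `u` (both again by Gibbs). Hence
`D(T q; qX (T q), qY (T q)) ≤ D(T q; qX q, qY q) ≤ D(q; qX q, qY q)`, so the loss decreases.
-/

open Real Finset Filter

/-- A strictly positive joint pmf on `Fin m × Fin n`. -/
def IsJointPMF {m n : ℕ} (p : Fin m → Fin n → ℝ) : Prop :=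
  (∀ x y, 0 < p x y) ∧ (∑ x, ∑ y, p x y = 1)

/-- A strictly positive conditional pmf `q z x y = q(z | x, y)`. -/
def IsCondPMF {m n k : ℕ} (q : Fin k → Fin m → Fin n → ℝ) : Prop :=
  (∀ z x y, 0 < q z x y) ∧ (∀ x y, ∑ z, q z x y = 1)

/-- Marginal `q(z | x)`. -/
noncomputable def qX {m n k : ℕ} (p : Fin m → Fin n → ℝ)
    (q : Fin k → Fin m → Fin n → ℝ) (z : Fin k) (x : Fin m) : ℝ :=
  (∑ y, q z x y * p x y) / (∑ y, p x y)

/-- Marginal `q(z | y)`. -/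
noncomputable def qY {m n k : ℕ} (p : Fin m → Fin n → ℝ)
    (q : Fin k → Fin m → Fin n → ℝ) (z : Fin k) (y : Fin n) : ℝ :=
  (∑ x, q z x y * p x y) / (∑ x, p x y)

/-- Marginal `q(z)`. -/
noncomputable def qZ {m n k : ℕ} (p : Fin m → Fin n → ℝ)
    (q : Fin k → Fin m → Fin n → ℝ) (z : Fin k) : ℝ :=
  ∑ x, ∑ y, q z x y * p x y

/-- The LatentSearch update `T_β(q)`. Here `(qZ z) ^ (1 - β)` is the real power `rpow`. -/
noncomputable def latentUpdate {m n k : ℕ} (β : ℝ) (p : Fin m → Fin n → ℝ)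
    (q : Fin k → Fin m → Fin n → ℝ) : Fin k → Fin m → Fin n → ℝ :=
  fun z x y =>
    (qX p q z x * qY p q z y / (qZ p q z) ^ (1 - β)) /
      (∑ z', qX p q z' x * qY p q z' y / (qZ p q z') ^ (1 - β))

/-- The loss `L_β(q) = I(X;Y|Z) + β H(Z)` computed from the joint `r(x,y,z) = q z x y * p x y`. -/
noncomputable def loss {m n k : ℕ} (β : ℝ) (p : Fin m → Fin n → ℝ)
    (q : Fin k → Fin m → Fin n → ℝ) : ℝ :=
  (∑ x, ∑ y, ∑ z, (q z x y * p x y) *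
      Real.log ((q z x y * p x y) * qZ p q z /
        ((∑ y', q z x y' * p x y') * (∑ x', q z x' y * p x' y)))) -
    β * ∑ z, qZ p q z * Real.log (qZ p q z)

/-- The mutual information `I(X;Y)` of the observed joint pmf `p`. -/
noncomputable def mutualInfo {m n : ℕ} (p : Fin m → Fin n → ℝ) : ℝ :=
  ∑ x, ∑ y, p x y * Real.log (p x y / ((∑ y', p x y') * (∑ x', p x' y)))

section Gibbs

variable {ι : Type*} [Fintype ι]

theorem sum_mul_log_div_nonneg {a b : ι → ℝ} (ha : ∀ i, 0 < a i) (hb : ∀ i, 0 < b i)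
    (hab : ∑ i, b i ≤ ∑ i, a i) : 0 ≤ ∑ i, a i * log (a i / b i) := by
  have hterm : ∀ i, a i - b i ≤ a i * log (a i / b i) := fun i =>
    calc a i - b i = a i * (1 - (a i / b i)⁻¹) := by
          rw [inv_div, mul_sub, mul_div_cancel₀ _ (ha i).ne', mul_one]
      _ ≤ a i * log (a i / b i) :=
          mul_le_mul_of_nonneg_left (one_sub_inv_le_log_of_pos (div_pos (ha i) (hb i))) (ha i).le
  calc 0 ≤ ∑ i, (a i - b i) := by rw [sum_sub_distrib]; linarith
    _ ≤ ∑ i, a i * log (a i / b i) := sum_le_sum fun i _ => hterm i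

theorem sum_normalized_mul_log_div_le {u c : ι → ℝ} (hu : ∀ i, 0 < u i) (hsu : ∑ i, u i = 1)
    (hc : ∀ i, 0 < c i) :
    ∑ i, c i / (∑ j, c j) * log (c i / (∑ j, c j) / c i) ≤ ∑ i, u i * log (u i / c i) := by
  set N := ∑ j, c j
  have hN : 0 < N :=
    sum_pos (fun i _ => hc i) (nonempty_of_sum_ne_zero (by rw [hsu]; exact one_ne_zero))
  have hlhs : ∑ i, c i / N * log (c i / N / c i) = -log N := by
    have hcancel : ∀ i, c i / N / c i = N⁻¹ := fun i => div_div_cancel_left' (hc i).ne'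
    simp_rw [hcancel, log_inv]
    rw [← sum_mul, ← sum_div, div_self hN.ne', one_mul]
  have hsplit : ∑ i, u i * log (u i / (c i / N)) = ∑ i, u i * log (u i / c i) + log N := by
    have hterm : ∀ i, u i * log (u i / (c i / N)) = u i * log (u i / c i) + u i * log N :=
      fun i => by
        rw [div_div_eq_mul_div, mul_div_right_comm,
          log_mul (div_pos (hu i) (hc i)).ne' hN.ne', mul_add]
    simp_rw [hterm, sum_add_distrib, ← sum_mul, hsu, one_mul]
  have hgibbs := sum_mul_log_div_nonneg hu (fun i => div_pos (hc i) hN)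
    (by rw [← sum_div, div_self hN.ne', hsu])
  linarith

end Gibbs

section PMF

variable {m n k : ℕ} {p : Fin m → Fin n → ℝ} {q : Fin k → Fin m → Fin n → ℝ}

namespace IsJointPMF

theorem univ_nonempty_left (hp : IsJointPMF p) : (univ : Finset (Fin m)).Nonempty :=
  nonempty_of_sum_ne_zero (by rw [hp.2]; exact one_ne_zero)

theorem univ_nonempty_right (hp : IsJointPMF p) : (univ : Finset (Fin n)).Nonempty :=
  nonempty_of_sum_ne_zero (f := fun y => ∑ x, p x y) (by rw [sum_comm, hp.2]; exact one_ne_zero)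

theorem rowSum_pos (hp : IsJointPMF p) (x : Fin m) : 0 < ∑ y, p x y :=
  sum_pos (fun y _ => hp.1 x y) hp.univ_nonempty_right

theorem colSum_pos (hp : IsJointPMF p) (y : Fin n) : 0 < ∑ x, p x y :=
  sum_pos (fun x _ => hp.1 x y) hp.univ_nonempty_left

end IsJointPMF

theorem IsCondPMF.univ_nonempty (hq : IsCondPMF q) (x : Fin m) (y : Fin n) :
    (univ : Finset (Fin k)).Nonempty :=
  nonempty_of_sum_ne_zero (by rw [hq.2 x y]; exact one_ne_zero)

theorem qX_pos (hp : IsJointPMF p) (hq : IsCondPMF q) (z : Fin k) (x : Fin m) :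
    0 < qX p q z x :=
  div_pos (sum_pos (fun y _ => mul_pos (hq.1 z x y) (hp.1 x y)) hp.univ_nonempty_right)
    (hp.rowSum_pos x)

theorem qY_pos (hp : IsJointPMF p) (hq : IsCondPMF q) (z : Fin k) (y : Fin n) :
    0 < qY p q z y :=
  div_pos (sum_pos (fun x _ => mul_pos (hq.1 z x y) (hp.1 x y)) hp.univ_nonempty_left)
    (hp.colSum_pos y)

theorem qZ_pos (hp : IsJointPMF p) (hq : IsCondPMF q) (z : Fin k) : 0 < qZ p q z :=
  sum_pos (fun x _ => sum_pos (fun y _ => mul_pos (hq.1 z x y) (hp.1 x y))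
    hp.univ_nonempty_right) hp.univ_nonempty_left

theorem sum_mul_eq_qX_mul (hp : IsJointPMF p) (z : Fin k) (x : Fin m) :
    ∑ y, q z x y * p x y = qX p q z x * ∑ y, p x y :=
  (div_mul_cancel₀ _ (hp.rowSum_pos x).ne').symm

theorem sum_mul_eq_qY_mul (hp : IsJointPMF p) (z : Fin k) (y : Fin n) :
    ∑ x, q z x y * p x y = qY p q z y * ∑ x, p x y :=
  (div_mul_cancel₀ _ (hp.colSum_pos y).ne').symm

theorem sum_qX (hp : IsJointPMF p) (hq : IsCondPMF q) (x : Fin m) : ∑ z, qX p q z x = 1 := by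
  simp only [qX]
  rw [← sum_div, sum_comm, div_eq_one_iff_eq (hp.rowSum_pos x).ne']
  exact sum_congr rfl fun y _ => by rw [← sum_mul, hq.2, one_mul]

theorem sum_qY (hp : IsJointPMF p) (hq : IsCondPMF q) (y : Fin n) : ∑ z, qY p q z y = 1 := by
  simp only [qY]
  rw [← sum_div, sum_comm, div_eq_one_iff_eq (hp.colSum_pos y).ne']
  exact sum_congr rfl fun x _ => by rw [← sum_mul, hq.2, one_mul]

theorem qY_le_one (hp : IsJointPMF p) (hq : IsCondPMF q) (z : Fin k) (y : Fin n) :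
    qY p q z y ≤ 1 :=
  sum_qY hp hq y ▸ single_le_sum (fun z _ => (qY_pos hp hq z y).le) (mem_univ z)

theorem sum_mul_sum_eq_sum_qX (hp : IsJointPMF p) (f : Fin k → Fin m → ℝ) :
    ∑ x, ∑ y, p x y * ∑ z, q z x y * f z x = ∑ x, (∑ y, p x y) * ∑ z, qX p q z x * f z x := by
  refine sum_congr rfl fun x _ => ?_
  calc ∑ y, p x y * ∑ z, q z x y * f z x = ∑ z, (∑ y, q z x y * p x y) * f z x := by
        simp only [mul_sum, sum_mul]
        rw [sum_comm]
        exact sum_congr rfl fun _ _ => sum_congr rfl fun _ _ => by ring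
    _ = (∑ y, p x y) * ∑ z, qX p q z x * f z x := by
        simp only [sum_mul_eq_qX_mul hp]
        rw [mul_sum]
        exact sum_congr rfl fun _ _ => by ring

theorem sum_mul_sum_eq_sum_qY (hp : IsJointPMF p) (f : Fin k → Fin n → ℝ) :
    ∑ x, ∑ y, p x y * ∑ z, q z x y * f z y = ∑ y, (∑ x, p x y) * ∑ z, qY p q z y * f z y := by
  rw [sum_comm]
  refine sum_congr rfl fun y _ => ?_
  calc ∑ x, p x y * ∑ z, q z x y * f z y = ∑ z, (∑ x, q z x y * p x y) * f z y := by
        simp only [mul_sum, sum_mul]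
        rw [sum_comm]
        exact sum_congr rfl fun _ _ => sum_congr rfl fun _ _ => by ring
    _ = (∑ x, p x y) * ∑ z, qY p q z y * f z y := by
        simp only [sum_mul_eq_qY_mul hp]
        rw [mul_sum]
        exact sum_congr rfl fun _ _ => by ring

theorem sum_mul_sum_eq_sum_qZ (g : Fin k → ℝ) :
    ∑ x, ∑ y, p x y * ∑ z, q z x y * g z = ∑ z, qZ p q z * g z := by
  calc ∑ x, ∑ y, p x y * ∑ z, q z x y * g z = ∑ x, ∑ z, ∑ y, q z x y * p x y * g z :=
        sum_congr rfl fun x _ => by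
          simp only [mul_sum]
          rw [sum_comm]
          exact sum_congr rfl fun _ _ => sum_congr rfl fun _ _ => by ring
    _ = ∑ z, qZ p q z * g z := by
        rw [sum_comm]
        simp only [qZ, sum_mul]

theorem latentUpdate_one :
    latentUpdate 1 p q =
      fun z x y => qX p q z x * qY p q z y / ∑ z', qX p q z' x * qY p q z' y := by
  ext z x y
  simp [latentUpdate]

theorem IsCondPMF.latentUpdate (hp : IsJointPMF p) (hq : IsCondPMF q) :
    IsCondPMF (latentUpdate 1 p q) := by
  have hN : ∀ x y, 0 < ∑ z, qX p q z x * qY p q z y := fun x y =>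
    sum_pos (fun z _ => mul_pos (qX_pos hp hq z x) (qY_pos hp hq z y)) (hq.univ_nonempty x y)
  rw [latentUpdate_one]
  exact ⟨fun z x y => div_pos (mul_pos (qX_pos hp hq z x) (qY_pos hp hq z y)) (hN x y),
    fun x y => by rw [← sum_div, div_self (hN x y).ne']⟩

end PMF

section Divergence

variable {m n k : ℕ} {p : Fin m → Fin n → ℝ} {q u : Fin k → Fin m → Fin n → ℝ}

noncomputable def factorDivergence (p : Fin m → Fin n → ℝ) (u : Fin k → Fin m → Fin n → ℝ)
    (a : Fin k → Fin m → ℝ) (b : Fin k → Fin n → ℝ) : ℝ :=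
  ∑ x, ∑ y, p x y * ∑ z, u z x y * log (u z x y / (a z x * b z y))

theorem loss_one_eq (hp : IsJointPMF p) (hq : IsCondPMF q) :
    loss 1 p q = mutualInfo p + factorDivergence p q (qX p q) (qY p q) := by
  have hlog : ∀ z x y, log (q z x y * p x y * qZ p q z /
        ((∑ y', q z x y' * p x y') * ∑ x', q z x' y * p x' y)) =
      log (p x y / ((∑ y', p x y') * ∑ x', p x' y)) +
        log (q z x y / (qX p q z x * qY p q z y)) + log (qZ p q z) := fun z x y => by
    have := hp.rowSum_pos x
    have := hp.colSum_pos y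
    have := qX_pos hp hq z x
    have := qY_pos hp hq z y
    have := qZ_pos hp hq z
    have := hp.1 x y
    have := hq.1 z x y
    rw [← log_mul (by positivity) (by positivity), ← log_mul (by positivity) (by positivity),
      sum_mul_eq_qX_mul hp, sum_mul_eq_qY_mul hp]
    congr 1
    field_simp
  have hterm : ∀ x y, ∑ z, q z x y * p x y * log (q z x y * p x y * qZ p q z /
        ((∑ y', q z x y' * p x y') * ∑ x', q z x' y * p x' y)) =
      p x y * log (p x y / ((∑ y', p x y') * ∑ x', p x' y)) +
        p x y * ∑ z, q z x y * log (q z x y / (qX p q z x * qY p q z y)) +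
        p x y * ∑ z, q z x y * log (qZ p q z) := fun x y => by
    calc _ = ∑ z, (q z x y * (p x y * log (p x y / ((∑ y', p x y') * ∑ x', p x' y))) +
          p x y * (q z x y * log (q z x y / (qX p q z x * qY p q z y))) +
          p x y * (q z x y * log (qZ p q z))) := sum_congr rfl fun z _ => by rw [hlog]; ring
      _ = _ := by rw [sum_add_distrib, sum_add_distrib, ← sum_mul, hq.2, one_mul, ← mul_sum,
          ← mul_sum]
  simp only [loss, mutualInfo, factorDivergence, hterm, sum_add_distrib,
    sum_mul_sum_eq_sum_qZ]
  ring

theorem factorDivergence_qX_qY_nonneg (hp : IsJointPMF p) (hq : IsCondPMF q) :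
    0 ≤ factorDivergence p q (qX p q) (qY p q) := by
  refine sum_nonneg fun x _ => sum_nonneg fun y _ => mul_nonneg (hp.1 x y).le ?_
  refine sum_mul_log_div_nonneg (hq.1 · x y)
    (fun z => mul_pos (qX_pos hp hq z x) (qY_pos hp hq z y)) ?_
  calc ∑ z, qX p q z x * qY p q z y ≤ ∑ z, qX p q z x :=
        sum_le_sum fun z _ => mul_le_of_le_one_right (qX_pos hp hq z x).le (qY_le_one hp hq z y)
    _ = ∑ z, q z x y := by rw [sum_qX hp hq, hq.2]

theorem factorDivergence_qX_qY_le (hp : IsJointPMF p) (hu : IsCondPMF u)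
    {a : Fin k → Fin m → ℝ} {b : Fin k → Fin n → ℝ} (ha : ∀ z x, 0 < a z x)
    (hb : ∀ z y, 0 < b z y) (hsa : ∀ x, ∑ z, a z x = 1) (hsb : ∀ y, ∑ z, b z y = 1) :
    factorDivergence p u (qX p u) (qY p u) ≤ factorDivergence p u a b := by
  have hlog : ∀ z x y, log (u z x y / (a z x * b z y)) =
      log (u z x y / (qX p u z x * qY p u z y)) + log (qX p u z x / a z x) +
        log (qY p u z y / b z y) := fun z x y => by
    have := qX_pos hp hu z x
    have := qY_pos hp hu z y
    have := ha z x
    have := hb z y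
    have := hu.1 z x y
    rw [← log_mul (by positivity) (by positivity), ← log_mul (by positivity) (by positivity)]
    congr 1
    field_simp
  have hsplit : factorDivergence p u a b = factorDivergence p u (qX p u) (qY p u) +
      ∑ x, ∑ y, p x y * ∑ z, u z x y * log (qX p u z x / a z x) +
      ∑ x, ∑ y, p x y * ∑ z, u z x y * log (qY p u z y / b z y) := by
    simp only [factorDivergence, hlog, mul_add, sum_add_distrib]
  have hX : 0 ≤ ∑ x, ∑ y, p x y * ∑ z, u z x y * log (qX p u z x / a z x) := by
    rw [sum_mul_sum_eq_sum_qX hp fun z x => log (qX p u z x / a z x)]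
    exact sum_nonneg fun x _ => mul_nonneg (hp.rowSum_pos x).le <|
      sum_mul_log_div_nonneg (qX_pos hp hu · x) (ha · x) (by rw [hsa, sum_qX hp hu])
  have hY : 0 ≤ ∑ x, ∑ y, p x y * ∑ z, u z x y * log (qY p u z y / b z y) := by
    rw [sum_mul_sum_eq_sum_qY hp fun z y => log (qY p u z y / b z y)]
    exact sum_nonneg fun y _ => mul_nonneg (hp.colSum_pos y).le <|
      sum_mul_log_div_nonneg (qY_pos hp hu · y) (hb · y) (by rw [hsb, sum_qY hp hu])
  linarith

theorem factorDivergence_normalized_le (hp : ∀ x y, 0 ≤ p x y) (hu : IsCondPMF u)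
    {a : Fin k → Fin m → ℝ} {b : Fin k → Fin n → ℝ} (ha : ∀ z x, 0 < a z x)
    (hb : ∀ z y, 0 < b z y) :
    factorDivergence p (fun z x y => a z x * b z y / ∑ z', a z' x * b z' y) a b ≤
      factorDivergence p u a b :=
  sum_le_sum fun x _ => sum_le_sum fun y _ => mul_le_mul_of_nonneg_left
    (sum_normalized_mul_log_div_le (hu.1 · x y) (hu.2 x y) fun z => mul_pos (ha z x) (hb z y))
    (hp x y)

theorem factorDivergence_latentUpdate_le (hp : IsJointPMF p) (hq : IsCondPMF q) :
    factorDivergence p (latentUpdate 1 p q) (qX p (latentUpdate 1 p q))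
        (qY p (latentUpdate 1 p q)) ≤ factorDivergence p q (qX p q) (qY p q) :=
  calc _ ≤ factorDivergence p (latentUpdate 1 p q) (qX p q) (qY p q) :=
        factorDivergence_qX_qY_le hp (hq.latentUpdate hp) (qX_pos hp hq) (qY_pos hp hq)
          (sum_qX hp hq) (sum_qY hp hq)
    _ ≤ _ := by
        rw [latentUpdate_one]
        exact factorDivergence_normalized_le (fun x y => (hp.1 x y).le) hq (qX_pos hp hq)
          (qY_pos hp hq)

theorem loss_latentUpdate_le (hp : IsJointPMF p) (hq : IsCondPMF q) :
    loss 1 p (latentUpdate 1 p q) ≤ loss 1 p q := by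
  rw [loss_one_eq hp (hq.latentUpdate hp), loss_one_eq hp hq]
  exact add_le_add_right (factorDivergence_latentUpdate_le hp hq) _

theorem mutualInfo_le_loss (hp : IsJointPMF p) (hq : IsCondPMF q) :
    mutualInfo p ≤ loss 1 p q := by
  rw [loss_one_eq hp hq]
  exact le_add_of_nonneg_right (factorDivergence_qX_qY_nonneg hp hq)

end Divergence

theorem latentSearch_loss_converges_general (m n k : ℕ)
    (p : Fin m → Fin n → ℝ) (hp : IsJointPMF p)
    (q₁ : Fin k → Fin m → Fin n → ℝ) (hq₁ : IsCondPMF q₁)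
    (qs : ℕ → Fin k → Fin m → Fin n → ℝ)
    (hqs0 : qs 0 = q₁) (hqsStep : ∀ i, qs (i + 1) = latentUpdate 1 p (qs i)) :
    (∀ i, IsCondPMF (qs i)) ∧
    (∀ i, loss 1 p (qs (i + 1)) ≤ loss 1 p (qs i)) ∧
    (∃ C : ℝ, ∀ i, C ≤ loss 1 p (qs i)) ∧
    (∃ l : ℝ, Filter.Tendsto (fun i => loss 1 p (qs i)) Filter.atTop (nhds l)) := by
  have hpmf : ∀ i, IsCondPMF (qs i) := fun i => by
    induction i with
    | zero => exact hqs0 ▸ hq₁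
    | succ i ih => exact hqsStep i ▸ ih.latentUpdate hp
  have hstep : ∀ i, loss 1 p (qs (i + 1)) ≤ loss 1 p (qs i) := fun i =>
    hqsStep i ▸ loss_latentUpdate_le hp (hpmf i)
  have hbdd : ∀ i, mutualInfo p ≤ loss 1 p (qs i) := fun i => mutualInfo_le_loss hp (hpmf i)
  exact ⟨hpmf, hstep, ⟨_, hbdd⟩, _, tendsto_atTop_ciInf (antitone_nat_of_succ_le hstep)
    ⟨_, Set.forall_mem_range.2 hbdd⟩⟩

/-- Convergence of the LatentSearch loss sequence for `β = 1`: iterating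
`q_{i+1} = T_1(q_i)` from a strictly positive conditional pmf `q₁`, every iterate is a strictly
positive conditional pmf, the loss sequence is nonincreasing and bounded below, and hence
converges to a limit in `ℝ`. -/
theorem latentSearch_loss_converges (m n k : ℕ)
    (hm : 1 ≤ m) (hn : 1 ≤ n) (hk : 1 ≤ k)
    (p : Fin m → Fin n → ℝ) (hp : IsJointPMF p)
    (q₁ : Fin k → Fin m → Fin n → ℝ) (hq₁ : IsCondPMF q₁)
    (qs : ℕ → Fin k → Fin m → Fin n → ℝ)
    (hqs0 : qs 0 = q₁) (hqsStep : ∀ i, qs (i + 1) = latentUpdate 1 p (qs i)) :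
    (∀ i, IsCondPMF (qs i)) ∧
    (∀ i, loss 1 p (qs (i + 1)) ≤ loss 1 p (qs i)) ∧
    (∃ C : ℝ, ∀ i, C ≤ loss 1 p (qs i)) ∧
    (∃ l : ℝ, Filter.Tendsto (fun i => loss 1 p (qs i)) Filter.atTop (nhds l)) :=
  latentSearch_loss_converges_general m n k p hp q₁ hq₁ qs hqs0 hqsStep
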